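/- If X is an infinite set, then 2^{X_d}_f contains no nonempty subset that is both closed and compact. -/

import Mathlib

open Set Topology TopologicalSpace

/-- The set of nonempty subsets of `X`: the hyperspace of the discrete space on `X`. -/
def NESet (X : Type*) := {C : Set X // C.Nonempty}

/-- The upper semifinite topology on the hyperspace of the discrete space `X`,
generated by the sets `B(U) = {C | C ⊆ U}` for `U ⊆ X`. -/
instance NESet.topologicalSpace (X : Type*) : TopologicalSpace (NESet X) :=
  TopologicalSpace.generateFrom {S | ∃ U : Set X, S = {C : NESet X | C.1 ⊆ U}}

/-- The set of nonempty finite subsets of `X`. -/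
def NEFin (X : Type*) := {C : Set X // C.Nonempty ∧ C.Finite}

/-- Inclusion of the nonempty finite subsets into the nonempty subsets. -/
noncomputable def NEFin.incl {X : Type*} (C : NEFin X) : NESet X := ⟨C.1, C.2.1⟩

/-- The subspace topology on the nonempty finite subsets, induced by the
upper semifinite topology. -/
noncomputable instance NEFin.topologicalSpace (X : Type*) : TopologicalSpace (NEFin X) :=
  TopologicalSpace.induced NEFin.incl inferInstance

/-! Open sets of the upper semifinite topology are closed under passing to nonempty subsets, so a
closed set containing `C` contains every finite superset of `C`; in particular a nonempty closed
set has members outside any given finite set when `X` is infinite. A compact set, on the other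
hand, is covered by finitely many basic opens `{E | E ⊆ D}`, so all its members lie in one finite
set. -/

namespace NESet

variable {X : Type*}

theorem mem_of_isOpen_of_subset {S : Set (NESet X)} (hS : IsOpen S) {C D : NESet X}
    (hD : D ∈ S) (hCD : C.1 ⊆ D.1) : C ∈ S := by
  induction hS generalizing D with
  | basic s hs =>
    obtain ⟨U, rfl⟩ := hs
    exact hCD.trans hD
  | univ => trivial
  | inter s t _ _ ihs iht => exact ⟨ihs hD.1 hCD, iht hD.2 hCD⟩
  | sUnion S _ ih =>
    obtain ⟨s, hs, hDs⟩ := hD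
    exact ⟨s, hs, ih s hs hDs hCD⟩

end NESet

namespace NEFin

variable {X : Type*}

theorem isOpen_setOf_subset (U : Set X) : IsOpen {E : NEFin X | E.1 ⊆ U} :=
  isOpen_induced_iff.2 ⟨{E : NESet X | E.1 ⊆ U}, isOpen_generateFrom_of_mem ⟨U, rfl⟩, rfl⟩

theorem mem_closure_of_subset {B : Set (NEFin X)} {C D : NEFin X} (hC : C ∈ B)
    (hCD : C.1 ⊆ D.1) : D ∈ closure B := by
  rw [mem_closure_iff]
  rintro _ ⟨G, hG, rfl⟩ hDG
  exact ⟨C, NESet.mem_of_isOpen_of_subset hG hDG hCD, hC⟩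

theorem exists_finite_subset_of_isCompact {K : Set (NEFin X)} (hK : IsCompact K) :
    ∃ F : Set X, F.Finite ∧ ∀ E ∈ K, E.1 ⊆ F := by
  obtain ⟨t, ht⟩ := hK.elim_finite_subcover (fun D : NEFin X ↦ {E : NEFin X | E.1 ⊆ D.1})
    (fun D ↦ isOpen_setOf_subset D.1) fun E _ ↦ mem_iUnion.2 ⟨E, (subset_rfl : E.1 ⊆ E.1)⟩
  refine ⟨⋃ D ∈ t, D.1, t.finite_toSet.biUnion fun D _ ↦ D.2.2, fun E hE ↦ ?_⟩
  obtain ⟨D, hD, hED⟩ := mem_iUnion₂.1 (ht hE)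
  exact hED.trans (subset_biUnion_of_mem (u := fun D : NEFin X ↦ D.1) hD)

theorem exists_mem_not_subset_of_isClosed [Infinite X] {B : Set (NEFin X)} (hB : IsClosed B)
    (hne : B.Nonempty) {F : Set X} (hF : F.Finite) : ∃ D ∈ B, ¬ D.1 ⊆ F := by
  obtain ⟨C, hC⟩ := hne
  obtain ⟨x, hx⟩ := hF.infinite_compl.nonempty
  let D : NEFin X := ⟨insert x C.1, insert_nonempty x C.1, C.2.2.insert x⟩
  refine ⟨D, hB.closure_subset (mem_closure_of_subset hC (subset_insert x C.1)), fun hDF ↦ ?_⟩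
  exact hx (hDF (mem_insert x C.1))

end NEFin

/-- If `X` is infinite, then `2^{X_d}_f` contains no nonempty subset that is both closed
and compact. -/
theorem stmt14 (X : Type*) [Infinite X] (B : Set (NEFin X)) (hB : B.Nonempty) :
    ¬ (IsClosed B ∧ IsCompact B) := by
  rintro ⟨hclosed, hcompact⟩
  obtain ⟨F, hF, hKF⟩ := NEFin.exists_finite_subset_of_isCompact hcompact
  obtain ⟨D, hD, hDF⟩ := NEFin.exists_mem_not_subset_of_isClosed hclosed hB hF
  exact hDF (hKF D hD)
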